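/- arXiv:1004.1696 — 9 statements merged into one kernel-verified Lean document; each statement's English description precedes it below -/
import Mathlib

section
/- Let 𝕜 be an RCLike field (ℝ or ℂ), let E be a finite-dimensional inner product space over 𝕜, let t be a quantum-logic term in n variables, and let U : Fin n → Submodule 𝕜 E be pairwise generic. Then eval t U belongs to the set {⊥, ⊤} ∪ {U i : i ∈ Fin n} ∪ {(U i)ᗮ : i ∈ Fin n}. -/
/-- A quantum-logic term in `n` variables. -/
inductive Term (n : ℕ) : Type
  | var : Fin n → Term n
  | neg : Term n → Term n
  | inf : Term n → Term n → Term n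
  | sup : Term n → Term n → Term n

/-- The value of a quantum-logic term under an assignment of subspaces
to the variables.  Negation is interpreted as orthogonal complement. -/
def Term.eval {n : ℕ} {𝕜 E : Type*} [RCLike 𝕜] [NormedAddCommGroup E]
    [InnerProductSpace 𝕜 E] : Term n → (Fin n → Submodule 𝕜 E) → Submodule 𝕜 E
  | .var i, U => U i
  | .neg t, U => (t.eval U)ᗮ
  | .inf s t, U => s.eval U ⊓ t.eval U
  | .sup s t, U => s.eval U ⊔ t.eval U

/-- A family of subspaces is pairwise generic. -/
def PairwiseGeneric {ι : Type*} {𝕜 E : Type*} [RCLike 𝕜] [NormedAddCommGroup E]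
    [InnerProductSpace 𝕜 E] (U : ι → Submodule 𝕜 E) : Prop :=
  (∀ i, U i ≠ ⊥ ∧ U i ≠ ⊤) ∧
  ∀ i j, i ≠ j →
    U i ⊓ U j = ⊥ ∧ U i ⊓ (U j)ᗮ = ⊥ ∧ (U i)ᗮ ⊓ (U j)ᗮ = ⊥

/-!
The set `{⊥, ⊤} ∪ {U i} ∪ {(U i)ᗮ}` contains every variable and is closed under the term
operations. Genericity makes distinct members of `{U i} ∪ {(U i)ᗮ}` disjoint,
so any meet of two members of the set is one of them or `⊥`; orthogonal complement permutes the
set; and in finite dimension `K ⊔ L = (Kᗮ ⊓ Lᗮ)ᗮ` reduces joins to the other two operations.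
-/

theorem Set.Pairwise.inf_mem_union_bot_top {α : Type*} [SemilatticeInf α] [OrderBot α]
    [OrderTop α] {A : Set α} (hA : A.Pairwise Disjoint) {a b : α}
    (ha : a ∈ ({⊥, ⊤} : Set α) ∪ A) (hb : b ∈ ({⊥, ⊤} : Set α) ∪ A) :
    a ⊓ b ∈ ({⊥, ⊤} : Set α) ∪ A := by
  rcases ha with (rfl | rfl) | ha
  · simp
  · simpa using hb
  rcases hb with (rfl | rfl) | hb
  · simp
  · simpa using Or.inr ha
  obtain rfl | hab := eq_or_ne a b
  · simpa using Or.inr ha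
  · exact Or.inl (Or.inl (hA ha hb hab).eq_bot)

namespace PairwiseGeneric

variable {ι 𝕜 E : Type*} [RCLike 𝕜] [NormedAddCommGroup E] [InnerProductSpace 𝕜 E]
  {U : ι → Submodule 𝕜 E}

theorem pairwise_disjoint (hU : PairwiseGeneric U) :
    (Set.range U ∪ Set.range fun i => (U i)ᗮ).Pairwise Disjoint := by
  have disjoint_orthogonal (i j : ι) : Disjoint (U i) (U j)ᗮ := by
    obtain rfl | hij := eq_or_ne i j
    · exact (U i).orthogonal_disjoint
    · exact disjoint_iff.2 (hU.2 i j hij).2.1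
  rintro _ (⟨i, rfl⟩ | ⟨i, rfl⟩) _ (⟨j, rfl⟩ | ⟨j, rfl⟩) hne
  · exact disjoint_iff.2 (hU.2 i j fun h => hne (h ▸ rfl)).1
  · exact disjoint_orthogonal i j
  · exact (disjoint_orthogonal j i).symm
  · exact disjoint_iff.2 (hU.2 i j fun h => hne (h ▸ rfl)).2.2

end PairwiseGeneric

theorem Submodule.orthogonal_mem_union_bot_top {ι 𝕜 E : Type*} [RCLike 𝕜]
    [NormedAddCommGroup E] [InnerProductSpace 𝕜 E] {U : ι → Submodule 𝕜 E}
    [∀ i, (U i).HasOrthogonalProjection] {K : Submodule 𝕜 E}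
    (hK : K ∈ ({⊥, ⊤} : Set (Submodule 𝕜 E)) ∪ (Set.range U ∪ Set.range fun i => (U i)ᗮ)) :
    Kᗮ ∈ ({⊥, ⊤} : Set (Submodule 𝕜 E)) ∪ (Set.range U ∪ Set.range fun i => (U i)ᗮ) := by
  rcases hK with (rfl | rfl) | ⟨i, rfl⟩ | ⟨i, rfl⟩
  · simp [Submodule.bot_orthogonal_eq_top]
  · simp [Submodule.top_orthogonal_eq_bot]
  · exact Or.inr (Or.inr ⟨i, rfl⟩)
  · exact Or.inr (Or.inl ⟨i, (U i).orthogonal_orthogonal.symm⟩)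

theorem eval_mem_of_pairwiseGeneric {n : ℕ} {𝕜 E : Type*} [RCLike 𝕜]
    [NormedAddCommGroup E] [InnerProductSpace 𝕜 E] [FiniteDimensional 𝕜 E]
    (t : Term n) (U : Fin n → Submodule 𝕜 E) (hU : PairwiseGeneric U) :
    t.eval U ∈ ({⊥, ⊤} : Set (Submodule 𝕜 E)) ∪ Set.range U ∪
      Set.range (fun i => (U i)ᗮ) := by
  rw [Set.union_assoc]
  induction t with
  | var i => exact Or.inr (Or.inl ⟨i, rfl⟩)
  | neg t ih => exact Submodule.orthogonal_mem_union_bot_top ih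
  | inf s t ihs iht => exact hU.pairwise_disjoint.inf_mem_union_bot_top ihs iht
  | sup s t ihs iht =>
    have de_morgan : s.eval U ⊔ t.eval U = ((s.eval U)ᗮ ⊓ (t.eval U)ᗮ)ᗮ := by
      rw [Submodule.inf_orthogonal, Submodule.orthogonal_orthogonal]
    rw [Term.eval, de_morgan]
    exact Submodule.orthogonal_mem_union_bot_top <| hU.pairwise_disjoint.inf_mem_union_bot_top
      (Submodule.orthogonal_mem_union_bot_top ihs) (Submodule.orthogonal_mem_union_bot_top iht)
end

section
/- Let 𝕜 be an RCLike field (ℝ or ℂ) and d : ℕ. There exist submodules X, Y of EuclideanSpace 𝕜 (Fin d) with X ⊔ Y = ⊤, Xᗮ ⊔ Y = ⊤, X ⊔ Yᗮ = ⊤, and Xᗮ ⊔ Yᗮ = ⊤ if and only if d is even. -/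
/-!
In `E` of dimension `n`, `X ⊔ Y = ⊤` implies `dim X + dim Y ≥ n`. Applying this to the four
pairs, with `dim Xᗮ = n - dim X` and `dim Yᗮ = n - dim Y`, forces `dim X = dim Y` and
`2 dim X = n`. Conversely, for `n = 2k` split an orthonormal basis into pairs `(uᵢ, vᵢ)` and take
`X = span {uᵢ}`, `Y = span {uᵢ + vᵢ}`: then `Xᗮ ⊇ span {vᵢ}`, `Yᗮ ⊇ span {uᵢ - vᵢ}`, and in each
plane `⟨uᵢ, vᵢ⟩` any two of the lines `𝕜 uᵢ, 𝕜 vᵢ, 𝕜 (uᵢ + vᵢ), 𝕜 (uᵢ - vᵢ)` span the plane.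
-/

open Module Set Submodule ComplexConjugate

namespace Submodule

theorem finrank_le_finrank_add_finrank_of_sup_eq_top {K V : Type*} [Field K] [AddCommGroup V]
    [Module K V] [FiniteDimensional K V] {A B : Submodule K V} (h : A ⊔ B = ⊤) :
    finrank K V ≤ finrank K A + finrank K B := by
  have := finrank_add_le_finrank_add_finrank A B
  rwa [h, finrank_top] at this

section SpanSumComb

variable {K V ι : Type*} [Field K] [AddCommGroup V] [Module K V]

def spanSumComb (w : ι ⊕ ι → V) (a b : K) : Submodule K V :=
  span K (range fun i => a • w (.inl i) + b • w (.inr i))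

theorem spanSumComb_sup_spanSumComb_eq_top {w : ι ⊕ ι → V} (hw : span K (range w) = ⊤)
    {a b c d : K} (hdet : a * d - b * c ≠ 0) :
    spanSumComb w a b ⊔ spanSumComb w c d = ⊤ := by
  set S := spanSumComb w a b ⊔ spanSumComb w c d
  have hab (i : ι) : a • w (.inl i) + b • w (.inr i) ∈ S :=
    mem_sup_left (subset_span ⟨i, rfl⟩)
  have hcd (i : ι) : c • w (.inl i) + d • w (.inr i) ∈ S :=
    mem_sup_right (subset_span ⟨i, rfl⟩)
  rw [eq_top_iff, ← hw, span_le]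
  rintro _ ⟨i | i, rfl⟩ <;> rw [SetLike.mem_coe, ← smul_mem_iff S hdet]
  · have : (a * d - b * c) • w (.inl i) =
        d • (a • w (.inl i) + b • w (.inr i)) - b • (c • w (.inl i) + d • w (.inr i)) := by
      module
    rw [this]
    exact sub_mem (smul_mem _ _ (hab i)) (smul_mem _ _ (hcd i))
  · have : (a * d - b * c) • w (.inr i) =
        a • (c • w (.inl i) + d • w (.inr i)) - c • (a • w (.inl i) + b • w (.inr i)) := by
      module
    rw [this]
    exact sub_mem (smul_mem _ _ (hcd i)) (smul_mem _ _ (hab i))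

end SpanSumComb

section InnerProductSpace

variable {𝕜 E : Type*} [RCLike 𝕜] [NormedAddCommGroup E] [InnerProductSpace 𝕜 E]

theorem spanSumComb_le_orthogonal {ι : Type*} {w : ι ⊕ ι → E} (hw : Orthonormal 𝕜 w)
    {a b c d : 𝕜} (h : a * conj c + b * conj d = 0) :
    spanSumComb w c d ≤ (spanSumComb w a b)ᗮ := by
  classical
  rw [← isOrtho_iff_le, spanSumComb, spanSumComb, isOrtho_span]
  rintro _ ⟨i, rfl⟩ _ ⟨j, rfl⟩
  simp only [inner_add_left, inner_add_right, inner_smul_left, inner_smul_right,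
    orthonormal_iff_ite.mp hw, Sum.inl.injEq, Sum.inr.injEq, reduceCtorEq, if_false]
  split_ifs
  · linear_combination h
  · ring

def IsGenericPair (X Y : Submodule 𝕜 E) : Prop :=
  X ⊔ Y = ⊤ ∧ Xᗮ ⊔ Y = ⊤ ∧ X ⊔ Yᗮ = ⊤ ∧ Xᗮ ⊔ Yᗮ = ⊤

theorem IsGenericPair.even_finrank [FiniteDimensional 𝕜 E] {X Y : Submodule 𝕜 E}
    (h : IsGenericPair X Y) : Even (finrank 𝕜 E) := by
  obtain ⟨h₁, h₂, h₃, h₄⟩ := h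
  have := X.finrank_add_finrank_orthogonal
  have := Y.finrank_add_finrank_orthogonal
  have := finrank_le_finrank_add_finrank_of_sup_eq_top h₁
  have := finrank_le_finrank_add_finrank_of_sup_eq_top h₂
  have := finrank_le_finrank_add_finrank_of_sup_eq_top h₃
  have := finrank_le_finrank_add_finrank_of_sup_eq_top h₄
  exact ⟨finrank 𝕜 X, by omega⟩

theorem isGenericPair_spanSumComb {ι : Type*} {w : ι ⊕ ι → E} (hw : Orthonormal 𝕜 w)
    (hspan : span 𝕜 (range w) = ⊤) :
    IsGenericPair (spanSumComb w (1 : 𝕜) 0) (spanSumComb w 1 1) := by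
  have hX : spanSumComb w 0 1 ≤ (spanSumComb w (1 : 𝕜) 0)ᗮ :=
    spanSumComb_le_orthogonal hw (by simp)
  have hY : spanSumComb w 1 (-1) ≤ (spanSumComb w (1 : 𝕜) 1)ᗮ :=
    spanSumComb_le_orthogonal hw (by simp)
  have hsup {a b c d : 𝕜} (hdet : a * d - b * c ≠ 0) {A B : Submodule 𝕜 E}
      (hA : spanSumComb w a b ≤ A) (hB : spanSumComb w c d ≤ B) : A ⊔ B = ⊤ :=
    top_unique (spanSumComb_sup_spanSumComb_eq_top hspan hdet ▸ sup_le_sup hA hB)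
  exact ⟨hsup (by norm_num) le_rfl le_rfl, hsup (by norm_num) hX le_rfl,
    hsup (by norm_num) le_rfl hY, hsup (by norm_num) hX hY⟩

theorem exists_isGenericPair_of_even_finrank [FiniteDimensional 𝕜 E] (h : Even (finrank 𝕜 E)) :
    ∃ X Y : Submodule 𝕜 E, IsGenericPair X Y := by
  obtain ⟨k, hk⟩ := h
  let b := (stdOrthonormalBasis 𝕜 E).reindex ((finCongr hk).trans finSumFinEquiv.symm)
  exact ⟨_, _, isGenericPair_spanSumComb b.orthonormal (by simpa using b.toBasis.span_eq)⟩

theorem exists_isGenericPair_iff_even_finrank [FiniteDimensional 𝕜 E] :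
    (∃ X Y : Submodule 𝕜 E, IsGenericPair X Y) ↔ Even (finrank 𝕜 E) :=
  ⟨fun ⟨_, _, h⟩ => h.even_finrank, exists_isGenericPair_of_even_finrank⟩

end InnerProductSpace

end Submodule

theorem exists_generic_pair_iff_even {𝕜 : Type*} [RCLike 𝕜] (d : ℕ) :
    (∃ X Y : Submodule 𝕜 (EuclideanSpace 𝕜 (Fin d)),
      X ⊔ Y = ⊤ ∧ Xᗮ ⊔ Y = ⊤ ∧ X ⊔ Yᗮ = ⊤ ∧ Xᗮ ⊔ Yᗮ = ⊤) ↔ Even d := by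
  have := exists_isGenericPair_iff_even_finrank (𝕜 := 𝕜) (E := EuclideanSpace 𝕜 (Fin d))
  rwa [finrank_euclideanSpace_fin] at this
end

section
/- Let 𝕜 be an RCLike field (ℝ or ℂ) and let y, z be submodules of EuclideanSpace 𝕜 (Fin 2) forming a pairwise generic pair, i.e. y, z ∉ {⊥, ⊤}, y ⊓ z = ⊥, y ⊓ zᗮ = ⊥, and yᗮ ⊓ zᗮ = ⊥. Then for every submodule X of EuclideanSpace 𝕜 (Fin 2): if X = ⊥ then (C(X,y) ⊓ C(X,z) ⊓ Xᗮ)ᗮ = ⊥, and if X ≠ ⊥ then (C(X,y) ⊓ C(X,z) ⊓ Xᗮ)ᗮ = ⊤. -/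
/-!
In a plane, a line `X` commutes (in the sense that `C(X, Y) ≠ ⊥`) only with the lines `Y` equal to
`X` or `Xᗮ`, since distinct lines meet trivially. The generic pair `y, z` shares no such line:
so for a line `X` one of `C(X, y)`, `C(X, z)` vanishes, and for `X = ⊤` the factor `Xᗮ` does.
-/

/-- The (lower) qlCommutator `C(X,Y)` of two subspaces of an inner product space. -/
noncomputable def qlCommutator {𝕜 E : Type*} [RCLike 𝕜] [NormedAddCommGroup E]
    [InnerProductSpace 𝕜 E] (X Y : Submodule 𝕜 E) : Submodule 𝕜 E :=
  (X ⊓ Y) ⊔ (X ⊓ Yᗮ) ⊔ (Xᗮ ⊓ Y) ⊔ (Xᗮ ⊓ Yᗮ)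

open Module

namespace Submodule

theorem inf_eq_bot_of_finrank_eq_one {K V : Type*} [DivisionRing K] [AddCommGroup V] [Module K V]
    {A B : Submodule K V} (hA : finrank K A = 1) (hB : finrank K B = 1) (hAB : A ≠ B) :
    A ⊓ B = ⊥ := by
  have := Module.finite_of_finrank_eq_succ hA
  have := Module.finite_of_finrank_eq_succ hB
  by_contra h
  have hpos : 0 < finrank K ↥(A ⊓ B) := Nat.pos_of_ne_zero (mt finrank_eq_zero.mp h)
  exact hAB <| (eq_of_le_of_finrank_le inf_le_left (by omega)).symm.trans
    (eq_of_le_of_finrank_le inf_le_right (by omega))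

theorem finrank_eq_one_of_finrank_eq_two {K V : Type*} [DivisionRing K] [AddCommGroup V]
    [Module K V] (hV : finrank K V = 2) {A : Submodule K V} (hA : A ≠ ⊥) (hA' : A ≠ ⊤) :
    finrank K A = 1 := by
  have := Module.finite_of_finrank_eq_succ hV
  have hlt := hV ▸ finrank_lt hA'
  have hpos : 0 < finrank K A := Nat.pos_of_ne_zero (mt finrank_eq_zero.mp hA)
  omega

variable {𝕜 E : Type*} [RCLike 𝕜] [NormedAddCommGroup E] [InnerProductSpace 𝕜 E]

theorem finrank_orthogonal_eq_one (hE : finrank 𝕜 E = 2) {A : Submodule 𝕜 E}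
    (hA : finrank 𝕜 A = 1) : finrank 𝕜 Aᗮ = 1 := by
  have := Module.finite_of_finrank_eq_succ hE
  have := finrank_add_finrank_orthogonal A
  omega

end Submodule

open Submodule

section

variable {𝕜 E : Type*} [RCLike 𝕜] [NormedAddCommGroup E] [InnerProductSpace 𝕜 E]

theorem qlCommutator_bot_left (Y : Submodule 𝕜 E) [Y.HasOrthogonalProjection] :
    qlCommutator ⊥ Y = ⊤ := by
  simp [qlCommutator, sup_orthogonal_of_hasOrthogonalProjection]

theorem qlCommutator_eq_bot_of_finrank_eq_one (hE : finrank 𝕜 E = 2) {X Y : Submodule 𝕜 E}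
    (hX : finrank 𝕜 X = 1) (hY : finrank 𝕜 Y = 1) (hXY : X ≠ Y) (hXY' : X ≠ Yᗮ) :
    qlCommutator X Y = ⊥ := by
  have := Module.finite_of_finrank_eq_succ hE
  have hXo := finrank_orthogonal_eq_one hE hX
  have hYo := finrank_orthogonal_eq_one hE hY
  have hXoY : Xᗮ ≠ Y := fun h => hXY' (by rw [← h, orthogonal_orthogonal])
  have hXoYo : Xᗮ ≠ Yᗮ := fun h => hXY (by rw [← orthogonal_orthogonal X, h, orthogonal_orthogonal])
  simp only [qlCommutator, inf_eq_bot_of_finrank_eq_one hX hY hXY,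
    inf_eq_bot_of_finrank_eq_one hX hYo hXY', inf_eq_bot_of_finrank_eq_one hXo hY hXoY,
    inf_eq_bot_of_finrank_eq_one hXo hYo hXoYo, sup_bot_eq]

end

theorem indiscrete_quantifier_2D {𝕜 : Type*} [RCLike 𝕜]
    (y z : Submodule 𝕜 (EuclideanSpace 𝕜 (Fin 2)))
    (hy : y ≠ ⊥) (hy' : y ≠ ⊤) (hz : z ≠ ⊥) (hz' : z ≠ ⊤)
    (h1 : y ⊓ z = ⊥) (h2 : y ⊓ zᗮ = ⊥) (h3 : yᗮ ⊓ zᗮ = ⊥)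
    (X : Submodule 𝕜 (EuclideanSpace 𝕜 (Fin 2))) :
    (X = ⊥ → (qlCommutator X y ⊓ qlCommutator X z ⊓ Xᗮ)ᗮ = ⊥) ∧
    (X ≠ ⊥ → (qlCommutator X y ⊓ qlCommutator X z ⊓ Xᗮ)ᗮ = ⊤) := by
  have hE : finrank 𝕜 (EuclideanSpace 𝕜 (Fin 2)) = 2 := finrank_euclideanSpace_fin
  refine ⟨fun hX => ?_, fun hX => ?_⟩
  · simp [hX, qlCommutator_bot_left]
  rw [orthogonal_eq_top_iff]
  by_cases hX' : X = ⊤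
  · simp [hX']
  have hX1 := finrank_eq_one_of_finrank_eq_two hE hX hX'
  have hz1 := finrank_eq_one_of_finrank_eq_two hE hz hz'
  by_cases hXy : X = y ∨ X = yᗮ
  · have hyz : y ≠ z ∧ y ≠ zᗮ :=
      ⟨Disjoint.ne hy (disjoint_iff.2 h1), Disjoint.ne hy (disjoint_iff.2 h2)⟩
    have hyoz : yᗮ ≠ z ∧ yᗮ ≠ zᗮ :=
      ⟨fun h => hyz.2 (by rw [← h, orthogonal_orthogonal]),
        Disjoint.ne (orthogonal_eq_bot_iff.not.2 hy') (disjoint_iff.2 h3)⟩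
    have hXz : qlCommutator X z = ⊥ := by
      rcases hXy with rfl | rfl
      exacts [qlCommutator_eq_bot_of_finrank_eq_one hE hX1 hz1 hyz.1 hyz.2,
        qlCommutator_eq_bot_of_finrank_eq_one hE hX1 hz1 hyoz.1 hyoz.2]
    simp [hXz]
  · obtain ⟨hXy, hXyo⟩ := not_or.1 hXy
    have hy1 := finrank_eq_one_of_finrank_eq_two hE hy hy'
    simp [qlCommutator_eq_bot_of_finrank_eq_one hE hX1 hy1 hXy hXyo]
end

section
/- Let 𝕜 be an RCLike field (ℝ or ℂ) and let U : Fin d → Submodule 𝕜 (EuclideanSpace 𝕜 (Fin d)) be a generic family of lines: finrank 𝕜 (U i) = 1 for every i, ⨆ i, U i = ⊤, and U i ⊓ (U j)ᗮ = ⊥ for all i, j. If a submodule X of EuclideanSpace 𝕜 (Fin d) satisfies C(X, U i) = ⊤ for every i, then X = ⊥ or X = ⊤. -/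
/-!
A line `L` is an atom, so it meets `X` and `Xᗮ` trivially unless it lies in one of them; in that
case the commutator `C(X, L)` collapses into `Lᗮ ≠ ⊤`. Hence every line `U i` lies in `X` or in
`Xᗮ`. Genericity forbids `U i ≤ X` together with `U j ≤ Xᗮ`, since then `U i ≤ X ≤ (U j)ᗮ`.
So all the lines lie on the same side, and as they span the space, `X = ⊤` or `Xᗮ = ⊤`.
-/

namespace Submodule

variable {𝕜 E : Type*} [RCLike 𝕜] [NormedAddCommGroup E] [InnerProductSpace 𝕜 E]

theorem qlCommutator_le_orthogonal {X Y : Submodule 𝕜 E} (hX : Disjoint Y X)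
    (hXc : Disjoint Y Xᗮ) : qlCommutator X Y ≤ Yᗮ := by
  simp only [qlCommutator, hX.symm.eq_bot, hXc.symm.eq_bot, bot_sup_eq, sup_bot_eq]
  exact sup_le inf_le_right inf_le_right

theorem le_or_le_orthogonal_of_qlCommutator_eq_top {X L : Submodule 𝕜 E} (hL : IsAtom L)
    (hXL : qlCommutator X L = ⊤) : L ≤ X ∨ L ≤ Xᗮ := by
  by_contra! h
  have hLc : Lᗮ = ⊤ := top_le_iff.mp <| hXL ▸
    qlCommutator_le_orthogonal (hL.not_le_iff_disjoint.mp h.1) (hL.not_le_iff_disjoint.mp h.2)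
  exact hL.ne_bot ((orthogonal_eq_top_iff L).mp hLc)

theorem eq_bot_of_le_of_le_orthogonal {X V W : Submodule 𝕜 E} (hV : V ≤ X) (hW : W ≤ Xᗮ)
    (hVW : V ⊓ Wᗮ = ⊥) : V = ⊥ :=
  eq_bot_iff.mpr <| hVW ▸ le_inf le_rfl (hV.trans (isOrtho_iff_le.mpr hW).symm.le)

theorem eq_bot_or_eq_top_of_forall_le_or_le_orthogonal {ι : Type*} {U : ι → Submodule 𝕜 E}
    (hU : ∀ i, U i ≠ ⊥) (hspan : ⨆ i, U i = ⊤) (hgen : ∀ i j, U i ⊓ (U j)ᗮ = ⊥)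
    {X : Submodule 𝕜 E} (hX : ∀ i, U i ≤ X ∨ U i ≤ Xᗮ) : X = ⊥ ∨ X = ⊤ := by
  by_cases hXc : ∃ j, U j ≤ Xᗮ
  · obtain ⟨j, hj⟩ := hXc
    have hall : ∀ i, U i ≤ Xᗮ := fun i =>
      (hX i).resolve_left fun hi => hU i (eq_bot_of_le_of_le_orthogonal hi hj (hgen i j))
    left
    rw [← orthogonal_eq_top_iff X, eq_top_iff, ← hspan]
    exact iSup_le hall
  · push Not at hXc
    right
    rw [eq_top_iff, ← hspan]
    exact iSup_le fun i => (hX i).resolve_right (hXc i)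

end Submodule

open Submodule in
theorem commutes_with_generic_lines_imp_boolean {𝕜 : Type*} [RCLike 𝕜] {d : ℕ}
    (U : Fin d → Submodule 𝕜 (EuclideanSpace 𝕜 (Fin d)))
    (hrank : ∀ i, Module.finrank 𝕜 (U i) = 1)
    (hspan : (⨆ i, U i) = ⊤)
    (hgen : ∀ i j, U i ⊓ (U j)ᗮ = ⊥)
    (X : Submodule 𝕜 (EuclideanSpace 𝕜 (Fin d)))
    (hX : ∀ i, qlCommutator X (U i) = ⊤) :
    X = ⊥ ∨ X = ⊤ := by
  have hline : ∀ i, IsAtom (U i) := fun i => isAtom_iff_finrank_eq_one.mpr (hrank i)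
  exact eq_bot_or_eq_top_of_forall_le_or_le_orthogonal (fun i => (hline i).ne_bot) hspan hgen
    fun i => le_or_le_orthogonal_of_qlCommutator_eq_top (hline i) (hX i)
end

section
/- Let 𝕜 be an RCLike field (ℝ or ℂ), d ≥ 1, and let U : Fin (2*d - 1) → Submodule 𝕜 (EuclideanSpace 𝕜 (Fin d)) be a generic set of lines: finrank 𝕜 (U i) = 1 for every i, U i ⊓ (U j)ᗮ = ⊥ for all i, j, and for every d-element subset s of Fin (2*d - 1) one has ⨆ i ∈ s, U i = ⊤. Then for every submodule X of EuclideanSpace 𝕜 (Fin d): if X = ⊥ then ⨆ i, (U i ⊓ (X ⊔ (U i)ᗮ)) = ⊥, and if X ≠ ⊥ then ⨆ i, (U i ⊓ (X ⊔ (U i)ᗮ)) = ⊤. -/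
/-!
The projection `Π(X, Z) = Z ⊓ (X ⊔ Zᗮ)` vanishes only when `X ⟂ Z` (modularity, using
`Z ⊔ Zᗮ = ⊤`), so the projection to a line is either `⊥` or the whole line. A nonzero `X` is
orthogonal to fewer than `d` of the lines, because any `d` of them span; hence at least `d` of
the `2d - 1` projections are full lines, and these span the space.
-/

open Finset

namespace Submodule

variable {𝕜 E : Type*} [RCLike 𝕜] [NormedAddCommGroup E] [InnerProductSpace 𝕜 E]
  {X Z : Submodule 𝕜 E}

theorem inf_sup_orthogonal_eq_bot_iff [Z.HasOrthogonalProjection] :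
    Z ⊓ (X ⊔ Zᗮ) = ⊥ ↔ X ⟂ Z := by
  rw [isOrtho_iff_le]
  refine ⟨fun h => ?_, fun h => by rw [sup_eq_right.mpr h, inf_orthogonal_eq_bot]⟩
  -- modularity: `X ⊔ Zᗮ = (Zᗮ ⊔ Z) ⊓ (X ⊔ Zᗮ) = Zᗮ ⊔ Z ⊓ (X ⊔ Zᗮ) = Zᗮ`
  have h_sup : X ⊔ Zᗮ = Zᗮ := by
    rw [← top_inf_eq (X ⊔ Zᗮ), ← Z.sup_orthogonal_of_hasOrthogonalProjection, sup_comm,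
      sup_inf_assoc_of_le _ le_sup_right, h, sup_bot_eq]
  exact sup_eq_right.mp h_sup

theorem inf_sup_orthogonal_eq_self_of_isAtom [Z.HasOrthogonalProjection] (hZ : IsAtom Z)
    (hX : ¬ X ⟂ Z) : Z ⊓ (X ⊔ Zᗮ) = Z :=
  (hZ.le_iff.mp inf_le_left).resolve_left (inf_sup_orthogonal_eq_bot_iff.not.mpr hX)

end Submodule

theorem Finset.iSup_eq_top_of_card_le {ι α : Type*} [CompleteLattice α] {U : ι → α} {n : ℕ}
    (hspan : ∀ s : Finset ι, s.card = n → ⨆ i ∈ s, U i = ⊤) {t : Finset ι} (ht : n ≤ t.card) :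
    ⨆ i ∈ t, U i = ⊤ := by
  obtain ⟨s, hst, hs⟩ := exists_subset_card_eq ht
  exact top_unique ((hspan s hs).ge.trans (biSup_mono fun i hi => hst hi))

theorem projections_to_generic_lines_general {𝕜 : Type*} [RCLike 𝕜] {d : ℕ}
    (U : Fin (2 * d - 1) → Submodule 𝕜 (EuclideanSpace 𝕜 (Fin d)))
    (hrank : ∀ i, Module.finrank 𝕜 (U i) = 1)
    (hspan : ∀ s : Finset (Fin (2 * d - 1)), s.card = d → (⨆ i ∈ s, U i) = ⊤)
    (X : Submodule 𝕜 (EuclideanSpace 𝕜 (Fin d))) :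
    (X = ⊥ → (⨆ i, U i ⊓ (X ⊔ (U i)ᗮ)) = ⊥) ∧
    (X ≠ ⊥ → (⨆ i, U i ⊓ (X ⊔ (U i)ᗮ)) = ⊤) := by
  classical
  refine ⟨fun hX => by simp [hX, Submodule.inf_orthogonal_eq_bot], fun hX => ?_⟩
  set good := univ.filter fun i => ¬ X ⟂ U i
  have h_bad : goodᶜ.card < d := by
    by_contra! h
    refine hX (X.orthogonal_eq_top_iff.mp (top_unique ?_))
    rw [← iSup_eq_top_of_card_le hspan h]
    exact iSup₂_le fun i hi => (by simpa [good] using hi : X ⟂ U i).ge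
  have h_good : d ≤ good.card := by
    have := card_compl good
    rw [Fintype.card_fin] at this
    omega
  refine top_unique ((iSup_eq_top_of_card_le hspan h_good).ge.trans (iSup₂_le fun i hi => ?_))
  rw [← Submodule.inf_sup_orthogonal_eq_self_of_isAtom
    (Submodule.isAtom_iff_finrank_eq_one.mpr (hrank i)) (mem_filter.mp hi).2]
  exact le_iSup (fun j => U j ⊓ (X ⊔ (U j)ᗮ)) i

theorem projections_to_generic_lines {𝕜 : Type*} [RCLike 𝕜] {d : ℕ} (hd : 1 ≤ d)
    (U : Fin (2 * d - 1) → Submodule 𝕜 (EuclideanSpace 𝕜 (Fin d)))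
    (hrank : ∀ i, Module.finrank 𝕜 (U i) = 1)
    (hperp : ∀ i j, U i ⊓ (U j)ᗮ = ⊥)
    (hspan : ∀ s : Finset (Fin (2 * d - 1)), s.card = d → (⨆ i ∈ s, U i) = ⊤)
    (X : Submodule 𝕜 (EuclideanSpace 𝕜 (Fin d))) :
    (X = ⊥ → (⨆ i, U i ⊓ (X ⊔ (U i)ᗮ)) = ⊥) ∧
    (X ≠ ⊥ → (⨆ i, U i ⊓ (X ⊔ (U i)ᗮ)) = ⊤) :=
  projections_to_generic_lines_general U hrank hspan X
end

section
/- Let d ≥ 1 and let t : Fin n → ℝ be strictly monotone with 0 ≤ t i for all i. For each i let u i ∈ EuclideanSpace ℝ (Fin d) be the vector with coordinates (u i) k = (t i)^k for k = 0, …, d−1, and let U i = ℝ ∙ (u i) be the line it spans. Then the family U is generic: for every subset s of Fin n with s.card = d one has ⨆ i ∈ s, U i = ⊤, and U i ⊓ (U j)ᗮ = ⊥ for all i, j. -/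
open scoped RealInnerProductSpace

open Submodule

/-
Any `d` of the moment vectors `(1, tᵢ, …, tᵢ^(d-1))` are the rows of a Vandermonde matrix with
distinct nodes, hence linearly independent, hence a basis of the `d`-dimensional space. For
`t i, t j ≥ 0` the inner product `∑ₖ (tᵢ tⱼ)^k` is at least its constant term `1`, so `u i` is
never orthogonal to `u j`, which forces `U i ⊓ (U j)ᗮ = ⊥`.
-/

theorem Matrix.linearIndependent_pow_of_injective {K ι : Type*} [Field K] [Fintype ι] {d : ℕ}
    {x : ι → K} (hx : Function.Injective x) (hcard : Fintype.card ι = d) :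
    LinearIndependent K (fun i (k : Fin d) => x i ^ (k : ℕ)) := by
  let e : ι ≃ Fin d := Fintype.equivFinOfCardEq hcard
  have hrows : LinearIndependent K (vandermonde (x ∘ e.symm)) :=
    linearIndependent_rows_of_det_ne_zero <|
      det_vandermonde_ne_zero_iff.mpr (hx.comp e.symm.injective)
  have hfun : (fun i (k : Fin d) => x i ^ (k : ℕ)) = vandermonde (x ∘ e.symm) ∘ e := by
    funext i k
    show _ = vandermonde (x ∘ e.symm) (e i) k
    rw [vandermonde_apply, Function.comp_apply, Equiv.symm_apply_apply]
  exact hfun ▸ hrows.comp e e.injective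

theorem EuclideanSpace.span_range_pow_eq_top {𝕜 ι : Type*} [RCLike 𝕜] [Fintype ι] {d : ℕ}
    {x : ι → 𝕜} (hx : Function.Injective x) (hcard : Fintype.card ι = d)
    {v : ι → EuclideanSpace 𝕜 (Fin d)} (hv : ∀ i k, v i k = x i ^ (k : ℕ)) :
    span 𝕜 (Set.range v) = ⊤ := by
  have hv' : v = (WithLp.linearEquiv 2 𝕜 (Fin d → 𝕜)).symm ∘ fun i k => x i ^ (k : ℕ) := by
    funext i; ext k; simp [hv]
  have hli : LinearIndependent 𝕜 v := by
    rw [hv']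
    exact (Matrix.linearIndependent_pow_of_injective hx hcard).map' _ (LinearEquiv.ker _)
  exact hli.span_eq_top_of_card_eq_finrank' (by simp [hcard])

theorem Submodule.span_singleton_inf_orthogonal_singleton_eq_bot {𝕜 E : Type*} [RCLike 𝕜]
    [NormedAddCommGroup E] [InnerProductSpace 𝕜 E] {x y : E} (hxy : inner 𝕜 y x ≠ 0) :
    (𝕜 ∙ x) ⊓ (𝕜 ∙ y)ᗮ = ⊥ := by
  rw [eq_bot_iff]
  rintro _ ⟨hz, hzy⟩
  obtain ⟨c, rfl⟩ := mem_span_singleton.mp hz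
  rw [SetLike.mem_coe, mem_orthogonal_singleton_iff_inner_right, inner_smul_right] at hzy
  simp [(mul_eq_zero.mp hzy).resolve_right hxy]

theorem EuclideanSpace.inner_pow_pos {d : ℕ} (hd : 1 ≤ d) {a b : ℝ} (ha : 0 ≤ a) (hb : 0 ≤ b)
    {v w : EuclideanSpace ℝ (Fin d)} (hv : ∀ k, v k = a ^ (k : ℕ)) (hw : ∀ k, w k = b ^ (k : ℕ)) :
    0 < ⟪v, w⟫ := by
  rw [PiLp.inner_apply]
  refine Finset.sum_pos' (fun k _ => ?_) ⟨⟨0, hd⟩, Finset.mem_univ _, by simp [hv, hw]⟩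
  simp only [hv, hw, RCLike.inner_apply, conj_trivial]
  positivity

theorem vandermonde_lines_generic {d n : ℕ} (hd : 1 ≤ d)
    (t : Fin n → ℝ) (ht : StrictMono t) (ht0 : ∀ i, 0 ≤ t i)
    (u : Fin n → EuclideanSpace ℝ (Fin d))
    (hu : ∀ (i : Fin n) (k : Fin d), u i k = t i ^ (k : ℕ))
    (U : Fin n → Submodule ℝ (EuclideanSpace ℝ (Fin d)))
    (hU : ∀ i, U i = Submodule.span ℝ {u i}) :
    (∀ s : Finset (Fin n), s.card = d → (⨆ i ∈ s, U i) = ⊤) ∧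
    ∀ i j, U i ⊓ (U j)ᗮ = ⊥ := by
  refine ⟨fun s hs => ?_, fun i j => ?_⟩
  · have hsup : (⨆ i ∈ s, U i) = span ℝ (Set.range fun i : s => u i) := by
      simp only [hU, span_range_eq_iSup, iSup_subtype']
    rw [hsup]
    exact EuclideanSpace.span_range_pow_eq_top (ht.injective.comp Subtype.val_injective)
      (by simpa using hs) (fun i => hu i)
  · rw [hU, hU]
    exact span_singleton_inf_orthogonal_singleton_eq_bot
      (EuclideanSpace.inner_pow_pos hd (ht0 j) (ht0 i) (hu j) (hu i)).ne'
end

section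
/- Let 𝕜 be an RCLike field (ℝ or ℂ) and d ≥ 3. For any two submodules A, B of EuclideanSpace 𝕜 (Fin d) there exists a submodule Z with Z ≠ ⊥, Z ≠ ⊤, C(A, Z) = ⊤, and C(B, Z) = ⊤; that is, every pair of subspaces of 𝕜^d with d ≥ 3 is reducible. -/
open Submodule Module Module.End

section
variable {𝕜 E : Type*} [RCLike 𝕜] [NormedAddCommGroup E] [InnerProductSpace 𝕜 E]

theorem qlCommutator_orthogonal_left (X : Submodule 𝕜 E) [X.HasOrthogonalProjection]
    (Y : Submodule 𝕜 E) : qlCommutator Xᗮ Y = qlCommutator X Y := by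
  rw [qlCommutator, qlCommutator, orthogonal_orthogonal]
  ac_rfl

theorem le_inf_sup_inf_orthogonal_of_mem_invtSubmodule {X Z : Submodule 𝕜 E}
    [X.HasOrthogonalProjection] (hZ : Z ∈ invtSubmodule (X.starProjection : End 𝕜 E)) :
    Z ≤ (X ⊓ Z) ⊔ (Xᗮ ⊓ Z) := by
  intro z hz
  have hPz : X.starProjection z ∈ Z := hZ hz
  rw [← add_sub_cancel (X.starProjection z) z]
  exact add_mem_sup ⟨starProjection_apply_mem X z, hPz⟩
    ⟨sub_starProjection_mem_orthogonal z, Z.sub_mem hz hPz⟩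

theorem qlCommutator_eq_top_of_mem_invtSubmodule {X Z : Submodule 𝕜 E}
    [X.HasOrthogonalProjection] [Z.HasOrthogonalProjection]
    (hZ : Z ∈ invtSubmodule (X.starProjection : End 𝕜 E)) : qlCommutator X Z = ⊤ := by
  have hZperp := X.starProjection_isSymmetric.orthogonalComplement_mem_invtSubmodule hZ
  rw [eq_top_iff, ← Z.sup_orthogonal_of_hasOrthogonalProjection]
  refine sup_le ((le_inf_sup_inf_orthogonal_of_mem_invtSubmodule hZ).trans ?_)
    ((le_inf_sup_inf_orthogonal_of_mem_invtSubmodule hZperp).trans ?_) <;>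
  · rw [qlCommutator]
    exact sup_le (by simp [le_sup_of_le_left]) (by simp [le_sup_of_le_left])

theorem exists_mem_ne_zero_starProjection_starProjection_eq_smul [FiniteDimensional 𝕜 E]
    {A : Submodule 𝕜 E} (hA : A ≠ ⊥) (B : Submodule 𝕜 E) :
    ∃ v ∈ A, v ≠ 0 ∧ ∃ μ : 𝕜, A.starProjection (B.starProjection v) = μ • v := by
  have : Nontrivial A := nontrivial_iff_ne_bot.mpr hA
  have := FiniteDimensional.complete 𝕜 E
  let T : End 𝕜 E := A.starProjection ∘L B.starProjection ∘L A.starProjection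
  have hT : T.IsSymmetric :=
    ((isSelfAdjoint_starProjection B).conj_starProjection A).isSymmetric
  have hTA : ∀ v ∈ A, T v ∈ A := fun v _ => starProjection_apply_mem A _
  obtain ⟨μ, hμ⟩ : ∃ μ, HasEigenvalue (T.restrict hTA) μ :=
    ⟨_, (hT.restrict_invariant hTA).hasEigenvalue_iSup_of_finiteDimensional⟩
  obtain ⟨v, hv⟩ := hμ.exists_hasEigenvector
  refine ⟨v, v.2, by simpa using hv.2, μ, ?_⟩
  have := congrArg Subtype.val hv.apply_eq_smul
  simpa [T, starProjection_eq_self_iff.mpr v.2] using this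

theorem span_pair_mem_invtSubmodule {f : End 𝕜 E} {v w : E} (hv : f v ∈ span 𝕜 {v, w})
    (hw : f w ∈ span 𝕜 {v, w}) : span 𝕜 {v, w} ∈ invtSubmodule f := by
  rw [mem_invtSubmodule, span_le, Set.insert_subset_iff, Set.singleton_subset_iff]
  exact ⟨hv, hw⟩

theorem exists_invtSubmodule_starProjection_of_finrank_le_two [FiniteDimensional 𝕜 E]
    {A : Submodule 𝕜 E} (hA : A ≠ ⊥) (B : Submodule 𝕜 E) :
    ∃ Z : Submodule 𝕜 E, Z ≠ ⊥ ∧ finrank 𝕜 Z ≤ 2 ∧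
      Z ∈ invtSubmodule (A.starProjection : End 𝕜 E) ∧
      Z ∈ invtSubmodule (B.starProjection : End 𝕜 E) := by
  obtain ⟨v, hvA, hv0, μ, hμ⟩ := exists_mem_ne_zero_starProjection_starProjection_eq_smul hA B
  have hv : v ∈ span 𝕜 {v, B.starProjection v} := subset_span (by simp)
  have hw : B.starProjection v ∈ span 𝕜 {v, B.starProjection v} := subset_span (by simp)
  refine ⟨span 𝕜 {v, B.starProjection v}, ?_, ?_, ?_, ?_⟩
  · exact fun h => hv0 (by simpa [h] using hv)
  · classical
    exact (finrank_span_le_card _).trans (by simpa using Finset.card_le_two)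
  · refine span_pair_mem_invtSubmodule ?_ ?_
    · simpa [starProjection_eq_self_iff.mpr hvA] using hv
    · simpa [hμ] using smul_mem _ μ hv
  · refine span_pair_mem_invtSubmodule hw ?_
    rwa [ContinuousLinearMap.coe_coe,
      starProjection_eq_self_iff.mpr (starProjection_apply_mem B v)]

end

theorem pair_reducible_of_three_le_dim {𝕜 : Type*} [RCLike 𝕜] {d : ℕ} (hd : 3 ≤ d)
    (A B : Submodule 𝕜 (EuclideanSpace 𝕜 (Fin d))) :
    ∃ Z : Submodule 𝕜 (EuclideanSpace 𝕜 (Fin d)),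
      Z ≠ ⊥ ∧ Z ≠ ⊤ ∧ qlCommutator A Z = ⊤ ∧ qlCommutator B Z = ⊤ := by
  have : Nontrivial (EuclideanSpace 𝕜 (Fin d)) :=
    Module.nontrivial_of_finrank_pos (R := 𝕜) (by rw [finrank_euclideanSpace_fin]; omega)
  obtain ⟨A', hA', hAA'⟩ : ∃ A', A' ≠ ⊥ ∧ ∀ Z, qlCommutator A' Z = qlCommutator A Z := by
    by_cases hA : A = ⊥
    · exact ⟨Aᗮ, by simp [hA], qlCommutator_orthogonal_left A⟩
    · exact ⟨A, hA, fun _ => rfl⟩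
  obtain ⟨Z, hZ, hZ2, hA'Z, hBZ⟩ := exists_invtSubmodule_starProjection_of_finrank_le_two hA' B
  refine ⟨Z, hZ, fun h => ?_, hAA' Z ▸ qlCommutator_eq_top_of_mem_invtSubmodule hA'Z,
    qlCommutator_eq_top_of_mem_invtSubmodule hBZ⟩
  rw [h, finrank_top, finrank_euclideanSpace_fin] at hZ2
  omega
end

section
/- Let 𝕜 be an RCLike field (ℝ or ℂ), let E and F be finite-dimensional inner product spaces over 𝕜, and equip E × F with the product inner product ⟨(x,y),(x',y')⟩ = ⟨x,x'⟩ + ⟨y,y'⟩. Let T : E →ₗ[𝕜] F be a linear map, let A be the subspace E × {0}, and let B = {(x, T x) : x ∈ E} be the graph of T. Then for a subspace X of E × F the following are equivalent: (i) X = (X ⊓ A) ⊔ (X ⊓ Aᗮ) and X = (X ⊓ B) ⊔ (X ⊓ Bᗮ); (ii) there exist subspaces V ≤ E and W ≤ F with T v ∈ W for all v ∈ V, (adjoint T) w ∈ V for all w ∈ W, and X = V × W (the product submodule). -/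
/-!
Along `WithLp.ofLp` everything becomes a statement about the plain product `E × F`, where
`Aᗮ = 0 × F` and `Bᗮ = {(-T* y, y)}`. Commuting with `A` then says exactly that `X = V × W`.
For such a product, `X ⊓ B` is the graph of `T` over `V ⊓ T⁻¹ W` and `X ⊓ Bᗮ` is the graph of `-T*`
over `W ⊓ T*⁻¹ V`; as `B ⊓ Bᗮ = 0`, these two parts span `X` iff both subspaces have full
dimension, i.e. iff `T V ≤ W` and `T* W ≤ V`.
-/

open Module LinearMap

namespace Submodule

section Field

variable {K E F : Type*} [Field K] [AddCommGroup E] [Module K E] [AddCommGroup F] [Module K F]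

lemma finrank_map_of_injective {f : E →ₗ[K] F} (hf : Function.Injective f) (p : Submodule K E) :
    finrank K (p.map f) = finrank K p :=
  (equivMapOfInjective f hf p).finrank_eq.symm

lemma finrank_inf_range_of_injective {f : E →ₗ[K] F} (hf : Function.Injective f)
    (q : Submodule K F) : finrank K ↥(q ⊓ range f) = finrank K (q.comap f) := by
  rw [inf_comm, ← map_comap_eq, finrank_map_of_injective hf]

lemma finrank_sup_of_disjoint [FiniteDimensional K E] {p q : Submodule K E} (h : Disjoint p q) :
    finrank K ↥(p ⊔ q) = finrank K p + finrank K q := by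
  rw [← finrank_sup_add_finrank_inf_eq, h.eq_bot, finrank_bot, add_zero]

lemma finrank_prod [FiniteDimensional K E] [FiniteDimensional K F] (V : Submodule K E)
    (W : Submodule K F) : finrank K (V.prod W) = finrank K V + finrank K W := by
  rw [LinearMap.prod_eq_sup_map,
    finrank_sup_of_disjoint (disjoint_inl_inr.mono map_le_range map_le_range),
    finrank_map_of_injective inl_injective, finrank_map_of_injective inr_injective]

theorem eq_inf_sup_inf_iff_exists_prod (Y : Submodule K (E × F)) :
    Y = Y ⊓ (⊤ : Submodule K E).prod ⊥ ⊔ Y ⊓ (⊥ : Submodule K E).prod ⊤ ↔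
      ∃ (V : Submodule K E) (W : Submodule K F), Y = V.prod W := by
  constructor
  · intro h
    refine ⟨Y.comap (inl K E F), Y.comap (inr K E F), ?_⟩
    have hinl : Y ⊓ (⊤ : Submodule K E).prod ⊥ = (Y.comap (inl K E F)).prod ⊥ := by
      ext ⟨x, y⟩
      simp only [mem_inf, mem_prod, mem_top, mem_bot, mem_comap, inl_apply, true_and]
      grind
    have hinr : Y ⊓ (⊥ : Submodule K E).prod ⊤ = (⊥ : Submodule K E).prod (Y.comap (inr K E F)) := by
      ext ⟨x, y⟩
      simp only [mem_inf, mem_prod, mem_top, mem_bot, mem_comap, inr_apply, and_true]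
      grind
    rwa [hinl, hinr, prod_sup_prod, sup_bot_eq, bot_sup_eq] at h
  · rintro ⟨V, W, rfl⟩
    rw [prod_inf_prod, prod_inf_prod, prod_sup_prod]
    simp

lemma range_id_prod_zero : range (id.prod (0 : E →ₗ[K] F)) = (⊤ : Submodule K E).prod ⊥ := by
  ext ⟨x, y⟩
  simp [eq_comm]

lemma range_zero_prod_id : range ((0 : F →ₗ[K] E).prod id) = (⊥ : Submodule K E).prod ⊤ := by
  ext ⟨x, y⟩
  simp [eq_comm]

theorem prod_eq_inf_range_sup_inf_range_iff [FiniteDimensional K E] [FiniteDimensional K F]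
    (f : E →ₗ[K] F) (g : F →ₗ[K] E) (hfg : Disjoint (range (id.prod f)) (range (g.prod id)))
    (V : Submodule K E) (W : Submodule K F) :
    V.prod W = V.prod W ⊓ range (id.prod f) ⊔ V.prod W ⊓ range (g.prod id) ↔
      V ≤ W.comap f ∧ W ≤ V.comap g := by
  have hf : Function.Injective (id.prod f : E →ₗ[K] E × F) := fun _ _ h ↦ congrArg Prod.fst h
  have hg : Function.Injective (g.prod id : F →ₗ[K] E × F) := fun _ _ h ↦ congrArg Prod.snd h
  have hfinrank : finrank K ↥(V.prod W ⊓ range (id.prod f) ⊔ V.prod W ⊓ range (g.prod id)) =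
      finrank K ↥(V ⊓ W.comap f) + finrank K ↥(W ⊓ V.comap g) := by
    rw [finrank_sup_of_disjoint (hfg.mono inf_le_right inf_le_right),
      finrank_inf_range_of_injective hf, finrank_inf_range_of_injective hg,
      comap_prod_prod, comap_prod_prod, comap_id, comap_id, inf_comm (V.comap g)]
  have hV := finrank_mono (inf_le_left : V ⊓ W.comap f ≤ V)
  have hW := finrank_mono (inf_le_left : W ⊓ V.comap g ≤ W)
  constructor
  · intro h
    have hsum := finrank_prod V W
    rw [h, hfinrank] at hsum
    rw [← inf_eq_left, ← inf_eq_left]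
    exact ⟨eq_of_le_of_finrank_eq inf_le_left (by omega),
      eq_of_le_of_finrank_eq inf_le_left (by omega)⟩
  · rintro ⟨hfVW, hgWV⟩
    refine (eq_of_le_of_finrank_eq (sup_le inf_le_left inf_le_left) ?_).symm
    rw [hfinrank, finrank_prod, inf_eq_left.mpr hfVW, inf_eq_left.mpr hgWV]

end Field

theorem comap_equiv_eq_inf_sup_inf_iff {R M N : Type*} [Ring R] [AddCommGroup M] [Module R M]
    [AddCommGroup N] [Module R N] (e : M ≃ₗ[R] N) (Y P Q : Submodule R N) :
    Y.comap (e : M →ₗ[R] N) = Y.comap (e : M →ₗ[R] N) ⊓ P.comap (e : M →ₗ[R] N) ⊔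
      Y.comap (e : M →ₗ[R] N) ⊓ Q.comap (e : M →ₗ[R] N) ↔ Y = Y ⊓ P ⊔ Y ⊓ Q := by
  simp only [comap_equiv_eq_map_symm, ← map_inf _ e.symm.injective, ← map_sup]
  exact (map_injective_of_injective e.symm.injective).eq_iff

end Submodule

section InnerProduct

variable {𝕜 E F : Type*} [RCLike 𝕜]
  [NormedAddCommGroup E] [InnerProductSpace 𝕜 E] [FiniteDimensional 𝕜 E]
  [NormedAddCommGroup F] [InnerProductSpace 𝕜 F] [FiniteDimensional 𝕜 F]

theorem LinearMap.inner_toLp_id_prod (T : E →ₗ[𝕜] F) (x : E) (p : WithLp 2 (E × F)) :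
    inner 𝕜 (WithLp.toLp 2 (x, T x)) p = inner 𝕜 x (p.fst + adjoint T p.snd) := by
  rw [WithLp.prod_inner_apply, inner_add_right, adjoint_inner_right]
  rfl

theorem LinearMap.orthogonal_comap_range_id_prod (T : E →ₗ[𝕜] F) :
    ((range (id.prod T)).comap (WithLp.linearEquiv 2 𝕜 (E × F) : WithLp 2 (E × F) →ₗ[𝕜] E × F))ᗮ =
      (range ((-adjoint T).prod id)).comap
        (WithLp.linearEquiv 2 𝕜 (E × F) : WithLp 2 (E × F) →ₗ[𝕜] E × F) := by
  ext p
  simp only [Submodule.mem_orthogonal, Submodule.mem_comap, mem_range, forall_exists_index]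
  constructor
  · intro h
    have hz : p.fst + adjoint T p.snd = 0 := by
      rw [← inner_self_eq_zero (𝕜 := 𝕜), ← inner_toLp_id_prod]
      exact h _ _ rfl
    exact ⟨p.snd, Prod.ext (eq_neg_of_add_eq_zero_left hz).symm rfl⟩
  · rintro ⟨y, hy⟩ q x hx
    have hq : q = WithLp.toLp 2 (x, T x) := congrArg (WithLp.toLp 2) hx.symm
    have hp : p = WithLp.toLp 2 (-adjoint T y, y) := congrArg (WithLp.toLp 2) hy.symm
    subst hq hp
    rw [inner_toLp_id_prod]
    simp

end InnerProduct

theorem commutes_with_graph_iff_invariant_product {𝕜 : Type*} [RCLike 𝕜]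
    {E F : Type*}
    [NormedAddCommGroup E] [InnerProductSpace 𝕜 E] [FiniteDimensional 𝕜 E]
    [NormedAddCommGroup F] [InnerProductSpace 𝕜 F] [FiniteDimensional 𝕜 F]
    (T : E →ₗ[𝕜] F)
    (A B : Submodule 𝕜 (WithLp 2 (E × F)))
    (hA : A = Submodule.comap
      ((WithLp.linearEquiv 2 𝕜 (E × F)) : WithLp 2 (E × F) →ₗ[𝕜] E × F)
      ((⊤ : Submodule 𝕜 E).prod (⊥ : Submodule 𝕜 F)))
    (hB : B = Submodule.comap
      ((WithLp.linearEquiv 2 𝕜 (E × F)) : WithLp 2 (E × F) →ₗ[𝕜] E × F)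
      (LinearMap.graph T))
    (X : Submodule 𝕜 (WithLp 2 (E × F))) :
    (X = (X ⊓ A) ⊔ (X ⊓ Aᗮ) ∧ X = (X ⊓ B) ⊔ (X ⊓ Bᗮ)) ↔
    (∃ (V : Submodule 𝕜 E) (W : Submodule 𝕜 F),
      (∀ v ∈ V, T v ∈ W) ∧ (∀ w ∈ W, LinearMap.adjoint T w ∈ V) ∧
      X = Submodule.comap
        ((WithLp.linearEquiv 2 𝕜 (E × F)) : WithLp 2 (E × F) →ₗ[𝕜] E × F)
        (V.prod W)) := by
  set e := WithLp.linearEquiv 2 𝕜 (E × F)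
  obtain ⟨Y, rfl⟩ : ∃ Y, X = Y.comap (e : WithLp 2 (E × F) →ₗ[𝕜] E × F) :=
    ⟨X.map (e : WithLp 2 (E × F) →ₗ[𝕜] E × F), (X.comap_map_eq_of_injective e.injective).symm⟩
  rw [graph_eq_range_prod] at hB
  have hAperp : Aᗮ = ((⊥ : Submodule 𝕜 E).prod ⊤).comap (e : WithLp 2 (E × F) →ₗ[𝕜] E × F) := by
    rw [hA, ← Submodule.range_id_prod_zero, orthogonal_comap_range_id_prod, map_zero, neg_zero,
      Submodule.range_zero_prod_id]
  have hBperp := hB ▸ orthogonal_comap_range_id_prod T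
  have hdisj : Disjoint (range (id.prod T)) (range ((-adjoint T).prod id)) := by
    have h := Submodule.disjoint_map e.injective B.orthogonal_disjoint
    rwa [hBperp, hB, Submodule.map_comap_eq_of_surjective e.surjective,
      Submodule.map_comap_eq_of_surjective e.surjective] at h
  rw [hAperp, hBperp, hA, hB, Submodule.comap_equiv_eq_inf_sup_inf_iff,
    Submodule.comap_equiv_eq_inf_sup_inf_iff, Submodule.eq_inf_sup_inf_iff_exists_prod]
  constructor
  · rintro ⟨⟨V, W, rfl⟩, h⟩
    obtain ⟨hTV, hTW⟩ := (Submodule.prod_eq_inf_range_sup_inf_range_iff _ _ hdisj V W).1 h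
    exact ⟨V, W, hTV, fun w hw ↦ neg_mem_iff.1 (hTW hw), rfl⟩
  · rintro ⟨V, W, hTV, hTW, hY⟩
    obtain rfl := Submodule.comap_injective_of_surjective e.surjective hY
    refine ⟨⟨V, W, rfl⟩, (Submodule.prod_eq_inf_range_sup_inf_range_iff _ _ hdisj V W).2 ?_⟩
    exact ⟨hTV, fun w hw ↦ neg_mem_iff.2 (hTW w hw)⟩
end

section
/- Let D be a nonempty set of natural numbers closed under addition (x ∈ D and y ∈ D imply x + y ∈ D). Then D is eventually an arithmetic progression: there exist N, g : ℕ such that for every x ≥ N one has x ∈ D if and only if g divides x. -/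
theorem AddSubmonoid.coe_closure_eq_insert_zero {M : Type*} [AddMonoid M] {s : Set M}
    (hs : ∀ x ∈ s, ∀ y ∈ s, x + y ∈ s) : (closure s : Set M) = insert 0 s := by
  refine subset_antisymm (fun x hx ↦ ?_) (Set.insert_subset (zero_mem _) subset_closure)
  induction hx using closure_induction with
  | mem x hx => exact .inr hx
  | zero => exact .inl rfl
  | add x y _ _ hx hy =>
    rcases hx with rfl | hx
    · rwa [zero_add]
    rcases hy with rfl | hy
    · rw [add_zero]; exact .inr hx
    exact .inr (hs x hx y hy)

theorem addSemigroup_eventually_arithmetic_progression_general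
    (D : Set ℕ)
    (hadd : ∀ x ∈ D, ∀ y ∈ D, x + y ∈ D) :
    ∃ N g : ℕ, ∀ x, N ≤ x → (x ∈ D ↔ g ∣ x) := by
  obtain ⟨N, hN⟩ := Nat.exists_mem_closure_of_ge D
  -- `N + 1` rather than `N` keeps `x` away from the `0` that the closure adjoins to `D`.
  refine ⟨N + 1, Nat.setGcd D, fun x hx ↦ ⟨Nat.setGcd_dvd_of_mem, fun hdvd ↦ ?_⟩⟩
  have hx_closure : x ∈ (AddSubmonoid.closure D : Set ℕ) := hN x (by omega) hdvd
  rw [AddSubmonoid.coe_closure_eq_insert_zero hadd] at hx_closure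
  exact hx_closure.resolve_left (by omega)

theorem addSemigroup_eventually_arithmetic_progression
    (D : Set ℕ) (hne : D.Nonempty)
    (hadd : ∀ x ∈ D, ∀ y ∈ D, x + y ∈ D) :
    ∃ N g : ℕ, ∀ x, N ≤ x → (x ∈ D ↔ g ∣ x) :=
  addSemigroup_eventually_arithmetic_progression_general D hadd
end
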